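/- Let k = 2t−1 be an odd integer with 1 ≤ t ≤ n+1, and let Ī = (a^6, a^5b, ab^5, b^6, a^4x_1y_1^2, b^4x_1^2y_1, …, a^4x_ny_n^2, b^4x_n^2y_n) ⊂ S. Then the monomial u = a^4 b^4 · (a^4x_1y_1^2)(b^4x_1^2y_1) ⋯ (a^4x_{t-1}y_{t-1}^2)(b^4x_{t-1}^2y_{t-1}) · x_t y_t ⋯ x_n y_n does not belong to Ī^k. -/
import Mathlib


open MvPolynomial

noncomputable section

/-- The type of the `2n+4` variables `a, b, c, d, x₁, y₁, …, xₙ, yₙ`. -/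
abbrev Vars (n : ℕ) : Type := Fin 4 ⊕ Fin n ⊕ Fin n

variable (K : Type*) [Field K] (n : ℕ)

/-- The variable `a`. -/
def va : MvPolynomial (Vars n) K := X (Sum.inl 0)
/-- The variable `b`. -/
def vb : MvPolynomial (Vars n) K := X (Sum.inl 1)
/-- The variable `c`. -/
def vc : MvPolynomial (Vars n) K := X (Sum.inl 2)
/-- The variable `d`. -/
def vd : MvPolynomial (Vars n) K := X (Sum.inl 3)
/-- The variable `xᵢ` (for `i = 0, …, n-1` corresponding to `x₁, …, xₙ`). -/
def vx (i : Fin n) : MvPolynomial (Vars n) K := X (Sum.inr (Sum.inl i))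
/-- The variable `yᵢ` (for `i = 0, …, n-1` corresponding to `y₁, …, yₙ`). -/
def vy (i : Fin n) : MvPolynomial (Vars n) K := X (Sum.inr (Sum.inr i))

/-- The monomial ideal
`I = (a⁶, a⁵b, ab⁵, b⁶, a⁴b⁴c, a⁴b⁴d, a⁴x₁y₁², b⁴x₁²y₁, …, a⁴xₙyₙ², b⁴xₙ²yₙ)`. -/
def idealI : Ideal (MvPolynomial (Vars n) K) :=
  Ideal.span
    ({va K n ^ 6, va K n ^ 5 * vb K n, va K n * vb K n ^ 5, vb K n ^ 6,
      va K n ^ 4 * vb K n ^ 4 * vc K n, va K n ^ 4 * vb K n ^ 4 * vd K n} ∪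
     Set.range (fun i => va K n ^ 4 * vx K n i * vy K n i ^ 2) ∪
     Set.range (fun i => vb K n ^ 4 * vx K n i ^ 2 * vy K n i))

/-- The graded maximal ideal `m = (a,b,c,d,x₁,y₁,…,xₙ,yₙ)`. -/
def mMax : Ideal (MvPolynomial (Vars n) K) := Ideal.span (Set.range X)

/-- The monomial
`u = a⁴b⁴ ⬝ (a⁴x₁y₁²)(b⁴x₁²y₁) ⋯ (a⁴x_{t-1}y_{t-1}²)(b⁴x_{t-1}²y_{t-1}) ⬝ x_t y_t ⋯ xₙyₙ`. -/
def uMon (t : ℕ) : MvPolynomial (Vars n) K :=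
  va K n ^ 4 * vb K n ^ 4 *
    ∏ i : Fin n,
      if (i : ℕ) < t - 1 then
        (va K n ^ 4 * vx K n i * vy K n i ^ 2) * (vb K n ^ 4 * vx K n i ^ 2 * vy K n i)
      else vx K n i * vy K n i

/-- The monomial ideal `Ī = (a⁶, a⁵b, ab⁵, b⁶, a⁴x₁y₁², b⁴x₁²y₁, …, a⁴xₙyₙ², b⁴xₙ²yₙ) ⊆ S`. -/
def idealIbar : Ideal (MvPolynomial (Vars n) K) :=
  Ideal.span
    ({va K n ^ 6, va K n ^ 5 * vb K n, va K n * vb K n ^ 5, vb K n ^ 6} ∪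
     Set.range (fun i => va K n ^ 4 * vx K n i * vy K n i ^ 2) ∪
     Set.range (fun i => vb K n ^ 4 * vx K n i ^ 2 * vy K n i))

/-! ### Auxiliary material -/

/-- The exponent vectors of the generators of `Ī`, indexed by `Vars n`. -/
def genExp : Vars n → (Vars n →₀ ℕ) :=
  Sum.elim
    (fun j =>
      if j = 0 then Finsupp.single (Sum.inl 0) 6
      else if j = 1 then Finsupp.single (Sum.inl 0) 5 + Finsupp.single (Sum.inl 1) 1
      else if j = 2 then Finsupp.single (Sum.inl 0) 1 + Finsupp.single (Sum.inl 1) 5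
      else Finsupp.single (Sum.inl 1) 6)
    (Sum.elim
      (fun i => Finsupp.single (Sum.inl 0) 4 + Finsupp.single (Sum.inr (Sum.inl i)) 1 +
                Finsupp.single (Sum.inr (Sum.inr i)) 2)
      (fun i => Finsupp.single (Sum.inl 1) 4 + Finsupp.single (Sum.inr (Sum.inl i)) 2 +
                Finsupp.single (Sum.inr (Sum.inr i)) 1))

lemma monomial_add_one (s t : Vars n →₀ ℕ) :
    monomial (s + t) (1:K) = monomial s 1 * monomial t 1 := by
  rw [monomial_mul, one_mul]

lemma monomial_single_one (v : Vars n) (k : ℕ) :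
    monomial (Finsupp.single v k) (1:K) = X v ^ k := X_pow_eq_monomial.symm

lemma gen_g0 : monomial (genExp n (Sum.inl 0)) (1:K) = va K n ^ 6 := by
  simp [genExp, monomial_single_one, va]
lemma gen_g1 : monomial (genExp n (Sum.inl 1)) (1:K) = va K n ^ 5 * vb K n := by
  simp only [genExp, Sum.elim_inl]
  simp only [Fin.reduceEq, reduceIte]
  rw [monomial_add_one, monomial_single_one, monomial_single_one, pow_one]
  rfl
lemma gen_g2 : monomial (genExp n (Sum.inl 2)) (1:K) = va K n * vb K n ^ 5 := by
  simp only [genExp, Sum.elim_inl]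
  simp only [Fin.reduceEq, reduceIte]
  rw [monomial_add_one, monomial_single_one, monomial_single_one, pow_one]
  rfl
lemma gen_g3 : monomial (genExp n (Sum.inl 3)) (1:K) = vb K n ^ 6 := by
  simp only [genExp, Sum.elim_inl]
  simp only [Fin.reduceEq, reduceIte]
  exact monomial_single_one K n _ _
lemma gen_gx (i : Fin n) : monomial (genExp n (Sum.inr (Sum.inl i))) (1:K)
    = va K n ^ 4 * vx K n i * vy K n i ^ 2 := by
  simp only [genExp, Sum.elim_inr, Sum.elim_inl]
  rw [monomial_add_one, monomial_add_one, monomial_single_one, monomial_single_one,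
    monomial_single_one, pow_one]
  rfl
lemma gen_gy (i : Fin n) : monomial (genExp n (Sum.inr (Sum.inr i))) (1:K)
    = vb K n ^ 4 * vx K n i ^ 2 * vy K n i := by
  simp only [genExp, Sum.elim_inr]
  rw [monomial_add_one, monomial_add_one, monomial_single_one, monomial_single_one,
    monomial_single_one, pow_one]
  rfl

lemma idealIbar_eq :
    idealIbar K n = Ideal.span ((fun s => monomial s (1:K)) '' Set.range (genExp n)) := by
  unfold idealIbar
  congr 1
  rw [← Set.range_comp]
  ext f
  constructor
  · rintro (((rfl | rfl | rfl | rfl) | ⟨i, rfl⟩) | ⟨i, rfl⟩)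
    · exact ⟨Sum.inl 0, gen_g0 K n⟩
    · exact ⟨Sum.inl 1, gen_g1 K n⟩
    · exact ⟨Sum.inl 2, gen_g2 K n⟩
    · exact ⟨Sum.inl 3, gen_g3 K n⟩
    · exact ⟨Sum.inr (Sum.inl i), gen_gx K n i⟩
    · exact ⟨Sum.inr (Sum.inr i), gen_gy K n i⟩
  · rintro ⟨j, rfl⟩
    rcases j with j | i | i
    · fin_cases j
      · exact Or.inl (Or.inl (Or.inl (gen_g0 K n)))
      · exact Or.inl (Or.inl (Or.inr (Or.inl (gen_g1 K n))))
      · exact Or.inl (Or.inl (Or.inr (Or.inr (Or.inl (gen_g2 K n)))))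
      · exact Or.inl (Or.inl (Or.inr (Or.inr (Or.inr (gen_g3 K n)))))
    · exact Or.inl (Or.inr ⟨i, (gen_gx K n i).symm⟩)
    · exact Or.inr ⟨i, (gen_gy K n i).symm⟩

lemma prod_monomial_one {σ ι : Type*} (s : Finset ι) (f : ι → (σ →₀ ℕ)) :
    (∏ i ∈ s, monomial (f i) (1:K)) = monomial (∑ i ∈ s, f i) 1 := by
  induction s using Finset.cons_induction with
  | empty => simp
  | cons a s ha ih => rw [Finset.prod_cons, Finset.sum_cons, ih, monomial_mul, one_mul]

/-- The exponent vector of the monomial `u`. -/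
def expU (t : ℕ) : Vars n →₀ ℕ :=
  Finsupp.single (Sum.inl 0) 4 + Finsupp.single (Sum.inl 1) 4 +
    ∑ i : Fin n,
      (if (i:ℕ) < t - 1 then genExp n (Sum.inr (Sum.inl i)) + genExp n (Sum.inr (Sum.inr i))
       else Finsupp.single (Sum.inr (Sum.inl i)) 1 + Finsupp.single (Sum.inr (Sum.inr i)) 1)

lemma uMon_eq (t : ℕ) : uMon K n t = monomial (expU n t) 1 := by
  unfold uMon expU
  rw [monomial_add_one, monomial_add_one, monomial_single_one, monomial_single_one,
    ← prod_monomial_one]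
  show va K n ^ 4 * vb K n ^ 4 * _ = X (Sum.inl 0) ^ 4 * X (Sum.inl 1) ^ 4 * _
  congr 1
  apply Finset.prod_congr rfl
  intro i _
  split_ifs
  · rw [monomial_add_one, gen_gx, gen_gy]
  · rw [monomial_add_one, monomial_single_one, monomial_single_one, pow_one, pow_one]
    rfl

lemma sum_ite_lt (c m N : ℕ) (h : m ≤ N) :
    (∑ i : Fin N, if (i:ℕ) < m then c else 0) = c * m := by
  rw [show (∑ i : Fin N, if (i:ℕ) < m then c else 0)
      = ∑ i ∈ Finset.range N, (if i < m then c else 0) from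
    Fin.sum_univ_eq_sum_range (fun i => if i < m then c else 0) N]
  have h2 : ∀ i, ((if i < m then c else 0) : ℕ) = if i ∈ Finset.range m then c else 0 := by
    simp [Finset.mem_range]
  simp only [h2]
  rw [Finset.sum_ite_mem, Finset.inter_eq_right.mpr (Finset.range_subset_range.mpr h)]
  simp [mul_comm]

lemma expU_A (t : ℕ) (h : t - 1 ≤ n) : expU n t (Sum.inl 0) = 4 + 4 * (t-1) := by
  unfold expU
  simp only [Finsupp.add_apply, Finsupp.single_apply, Finsupp.finset_sum_apply, genExp,
    Sum.elim_inr, Sum.elim_inl, Sum.inl.injEq, Sum.inr.injEq, reduceCtorEq, Fin.isValue,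
    apply_ite (fun f : (Vars n →₀ ℕ) => f (Sum.inl 0))]
  norm_num
  rw [sum_ite_lt 4 (t-1) n h]

lemma expU_B (t : ℕ) (h : t - 1 ≤ n) : expU n t (Sum.inl 1) = 4 + 4 * (t-1) := by
  unfold expU
  simp only [Finsupp.add_apply, Finsupp.single_apply, Finsupp.finset_sum_apply, genExp,
    Sum.elim_inr, Sum.elim_inl, Sum.inl.injEq, Sum.inr.injEq, reduceCtorEq, Fin.isValue,
    apply_ite (fun f : (Vars n →₀ ℕ) => f (Sum.inl 1))]
  norm_num
  rw [sum_ite_lt 4 (t-1) n h]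

lemma expU_X (t : ℕ) (i0 : Fin n) :
    expU n t (Sum.inr (Sum.inl i0)) = if (i0:ℕ) < t - 1 then 3 else 1 := by
  unfold expU
  simp only [Finsupp.add_apply, Finsupp.single_apply, Finsupp.finset_sum_apply, genExp,
    Sum.elim_inr, Sum.elim_inl, Sum.inl.injEq, Sum.inr.injEq, reduceCtorEq, Fin.isValue,
    apply_ite (fun f : (Vars n →₀ ℕ) => f (Sum.inr (Sum.inl i0)))]
  norm_num
  rw [Finset.sum_eq_single i0]
  · simp
  · intro b _ hb
    simp [hb]
  · simp

lemma expU_Y (t : ℕ) (i0 : Fin n) :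
    expU n t (Sum.inr (Sum.inr i0)) = if (i0:ℕ) < t - 1 then 3 else 1 := by
  unfold expU
  simp only [Finsupp.add_apply, Finsupp.single_apply, Finsupp.finset_sum_apply, genExp,
    Sum.elim_inr, Sum.elim_inl, Sum.inl.injEq, Sum.inr.injEq, reduceCtorEq, Fin.isValue,
    apply_ite (fun f : (Vars n →₀ ℕ) => f (Sum.inr (Sum.inr i0)))]
  norm_num
  rw [Finset.sum_eq_single i0]
  · simp
  · intro b _ hb
    simp [hb]
  · simp

theorem mem_pow_span_monomial {σ R ι : Type*} [CommSemiring R] [Fintype ι] [DecidableEq ι]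
    (g : ι → (σ →₀ ℕ)) (k : ℕ) (f : MvPolynomial σ R)
    (hf : f ∈ (Ideal.span ((fun s => monomial s (1:R)) '' Set.range g)) ^ k) :
    ∀ e ∈ f.support, ∃ c : ι → ℕ, (∑ j, c j) = k ∧ (∑ j, c j • g j) ≤ e := by
  classical
  induction k generalizing f with
  | zero =>
    intro e he
    exact ⟨0, by simp, by simp⟩
  | succ k ih =>
    rw [pow_succ] at hf
    refine Submodule.mul_induction_on hf ?_ ?_
    · intro p hp q hq e he
      obtain ⟨e1, he1, e2, he2, rfl⟩ := Finset.mem_add.mp (support_mul p q he)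
      obtain ⟨c, hc1, hc2⟩ := ih p hp e1 he1
      obtain ⟨s, hs, hle⟩ := mem_ideal_span_monomial_image.mp hq e2 he2
      obtain ⟨j, rfl⟩ := hs
      refine ⟨(c + Pi.single j 1 : ι → ℕ), ?_, ?_⟩
      · simp [Finset.sum_add_distrib, hc1, Finset.sum_pi_single']
      · have : (∑ j', (c + Pi.single j 1 : ι → ℕ) j' • g j') = (∑ j', c j' • g j') + g j := by
          simp only [Pi.add_apply, add_smul, Finset.sum_add_distrib]
          congr 1
          rw [Finset.sum_eq_single j] <;> simp (config := {contextual := true}) [Pi.single_apply]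
        rw [this]
        exact add_le_add hc2 hle
    · intro x y hx hy e he
      rcases Finset.mem_union.mp (Finsupp.support_add he) with h | h
      exacts [hx e h, hy e h]

/-- For `k = 2t-1` odd with `1 ≤ t ≤ n+1`, the monomial `u` does not belong to `Īᵏ`. -/
theorem u_not_mem_bar_pow (t : ℕ) (ht1 : 1 ≤ t) (ht2 : t ≤ n + 1) :
    uMon K n t ∉ ((idealIbar K n) ^ (2 * t - 1) : Ideal (MvPolynomial (Vars n) K)) := by
  classical
  intro h
  have htn : t - 1 ≤ n := by omega
  rw [idealIbar_eq] at h
  have hE : expU n t ∈ (uMon K n t).support := by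
    rw [uMon_eq, support_monomial, if_neg one_ne_zero]
    exact Finset.mem_singleton_self _
  obtain ⟨c, hsum, hle⟩ := mem_pow_span_monomial (genExp n) (2*t-1) (uMon K n t) h (expU n t) hE
  -- pointwise inequalities
  have hle' : ∀ v, (∑ j : Vars n, c j * genExp n j v) ≤ expU n t v := by
    intro v
    have h2 := Finsupp.le_def.mp hle v
    simpa [Finsupp.finset_sum_apply, Finsupp.smul_apply] using h2
  -- total count
  have hsum' : (c (Sum.inl 0) + c (Sum.inl 1) + c (Sum.inl 2) + c (Sum.inl 3))
      + ((∑ i, c (Sum.inr (Sum.inl i))) + (∑ i, c (Sum.inr (Sum.inr i)))) = 2 * t - 1 := by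
    rw [← hsum, Fintype.sum_sum_type, Fintype.sum_sum_type, Fin.sum_univ_four]
  -- coordinate A
  have hA := hle' (Sum.inl 0)
  rw [expU_A n t htn, Fintype.sum_sum_type, Fintype.sum_sum_type, Fin.sum_univ_four] at hA
  simp only [genExp, Sum.elim_inl, Sum.elim_inr, Fin.reduceEq, reduceIte, if_pos rfl,
    Finsupp.add_apply, Finsupp.single_apply, Sum.inl.injEq, Sum.inr.injEq, reduceCtorEq,
    if_true, if_false, Fin.isValue] at hA
  norm_num at hA
  rw [← Finset.sum_mul] at hA
  -- coordinate B
  have hB := hle' (Sum.inl 1)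
  rw [expU_B n t htn, Fintype.sum_sum_type, Fintype.sum_sum_type, Fin.sum_univ_four] at hB
  simp only [genExp, Sum.elim_inl, Sum.elim_inr, Fin.reduceEq, reduceIte, if_pos rfl,
    Finsupp.add_apply, Finsupp.single_apply, Sum.inl.injEq, Sum.inr.injEq, reduceCtorEq,
    if_true, if_false, Fin.isValue] at hB
  norm_num at hB
  rw [← Finset.sum_mul] at hB
  -- coordinates X i, Y i
  have hX : ∀ i0 : Fin n, c (Sum.inr (Sum.inl i0)) + 2 * c (Sum.inr (Sum.inr i0)) ≤ (if (i0:ℕ) < t - 1 then 3 else 1) := by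
    intro i0
    have h2 := hle' (Sum.inr (Sum.inl i0))
    rw [expU_X n t i0, Fintype.sum_sum_type, Fintype.sum_sum_type, Fin.sum_univ_four] at h2
    simp only [genExp, Sum.elim_inl, Sum.elim_inr, Fin.reduceEq, reduceIte,
      Finsupp.add_apply, Finsupp.single_apply, Sum.inl.injEq, Sum.inr.injEq, reduceCtorEq,
      if_true, if_false, Fin.isValue, mul_ite, mul_one, mul_zero, mul_add, zero_add,
      add_zero] at h2
    rw [Finset.sum_ite_eq' Finset.univ i0, Finset.sum_ite_eq' Finset.univ i0] at h2
    simpa [mul_comm] using h2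
  have hY : ∀ i0 : Fin n, 2 * c (Sum.inr (Sum.inl i0)) + c (Sum.inr (Sum.inr i0)) ≤ (if (i0:ℕ) < t - 1 then 3 else 1) := by
    intro i0
    have h2 := hle' (Sum.inr (Sum.inr i0))
    rw [expU_Y n t i0, Fintype.sum_sum_type, Fintype.sum_sum_type, Fin.sum_univ_four] at h2
    simp only [genExp, Sum.elim_inl, Sum.elim_inr, Fin.reduceEq, reduceIte,
      Finsupp.add_apply, Finsupp.single_apply, Sum.inl.injEq, Sum.inr.injEq, reduceCtorEq,
      if_true, if_false, Fin.isValue, mul_ite, mul_one, mul_zero, mul_add, zero_add,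
      add_zero] at h2
    rw [Finset.sum_ite_eq' Finset.univ i0, Finset.sum_ite_eq' Finset.univ i0] at h2
    simpa [mul_comm] using h2
  -- bounds on P and Q
  have hPb : (∑ i, c (Sum.inr (Sum.inl i))) ≤ t - 1 := by
    calc (∑ i, c (Sum.inr (Sum.inl i))) ≤ ∑ i : Fin n, (if (i:ℕ) < t - 1 then 1 else 0) := by
          apply Finset.sum_le_sum
          intro i _
          have := hX i; have := hY i
          split_ifs at * <;> omega
      _ = t - 1 := by rw [sum_ite_lt 1 (t-1) n htn, one_mul]
  have hQb : (∑ i, c (Sum.inr (Sum.inr i))) ≤ t - 1 := by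
    calc (∑ i, c (Sum.inr (Sum.inr i))) ≤ ∑ i : Fin n, (if (i:ℕ) < t - 1 then 1 else 0) := by
          apply Finset.sum_le_sum
          intro i _
          have := hX i; have := hY i
          split_ifs at * <;> omega
      _ = t - 1 := by rw [sum_ite_lt 1 (t-1) n htn, one_mul]
  set c0 := c (Sum.inl 0) with hc0
  set c1 := c (Sum.inl 1) with hc1
  set c2 := c (Sum.inl 2) with hc2
  set c3 := c (Sum.inl 3) with hc3
  set G := ∑ i, c (Sum.inr (Sum.inl i)) with hG
  set Q := ∑ i, c (Sum.inr (Sum.inr i)) with hQ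
  clear_value c0 c1 c2 c3 G Q
  have hb0 : c0 ≤ 2 := by omega
  have hb1 : c1 ≤ 2 := by omega
  have hb2 : c2 ≤ 2 := by omega
  have hb3 : c3 ≤ 2 := by omega
  interval_cases c0 <;> interval_cases c1 <;> interval_cases c2 <;> interval_cases c3 <;> omega
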